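/- For discrete random variables x, y, a, b with H(axy) = H(bxy) = H(abxy) = H(xy) (all edge functions determined by the sources) and satisfying downstreamness H(abx) = H(bx), H(aby) = H(ay), the inequality H(ab) ≤ H(b|x) + H(a|y) + I(x;y) holds. -/

import Mathlib

/-- Shannon entropy of (the random variable given by) a function `f` on a finite
message set `M` equipped with the uniform distribution. -/
noncomputable def ent {M : Type*} [Fintype M] {A : Type*} [DecidableEq A] (f : M → A) : ℝ :=
  -∑ a ∈ Finset.univ.image f,
      (((Finset.univ.filter fun m => f m = a).card : ℝ) / (Fintype.card M : ℝ)) *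
        Real.log (((Finset.univ.filter fun m => f m = a).card : ℝ) / (Fintype.card M : ℝ))

/-!
Writing `ent f = log |M| - (1/|M|) ∑ₘ log |f⁻¹(f m)|`, submodularity
`H(fgh) + H(f) ≤ H(fg) + H(fh)` follows from `log t ≤ t - 1` applied to the ratio of fibre sizes
`|fg-fibre| |fh-fibre| / (|fgh-fibre| |f-fibre|)`, whose sum over `m` is at most `|M|` because the
`fgh`-fibres inside an `f`-fibre embed into pairs of an `fg`- and an `fh`-fibre. For `f = (a, b)`,
`g = x`, `h = y` this is `H(abxy) + H(ab) ≤ H(abx) + H(aby)`, and the hypotheses turn the right side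
into `H(bx) + H(ay)` and `H(abxy)` into `H(xy)`.
-/

open Finset Real

lemma log_add_log_le_log_add_log_add_div_sub_one {a b c d : ℝ} (ha : 0 < a) (hb : 0 < b)
    (hc : 0 < c) (hd : 0 < d) : log a + log b ≤ log c + log d + (a * b / (c * d) - 1) := by
  have := log_le_sub_one_of_pos (x := a * b / (c * d)) (by positivity)
  rw [log_div (by positivity) (by positivity), log_mul ha.ne' hb.ne', log_mul hc.ne' hd.ne'] at this
  linarith

section

variable {M : Type*} [Fintype M] {A B C : Type*} [DecidableEq A] [DecidableEq B] [DecidableEq C]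

def fiberCard (f : M → A) (a : A) : ℕ := #{m | f m = a}

lemma fiberCard_apply_pos (f : M → A) (m : M) : 0 < fiberCard f (f m) :=
  card_pos.2 ⟨m, by simp⟩

lemma fiberCard_pos_of_mem_image {f : M → A} {a : A} (ha : a ∈ univ.image f) :
    0 < fiberCard f a := by
  obtain ⟨m, -, rfl⟩ := mem_image.1 ha
  exact fiberCard_apply_pos f m

lemma sum_fiberCard (f : M → A) : ∑ a ∈ univ.image f, fiberCard f a = Fintype.card M :=
  (card_eq_sum_card_image f univ).symm

lemma ent_eq_sum_fiberCard (f : M → A) :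
    ent f = -∑ a ∈ univ.image f,
      (fiberCard f a / Fintype.card M : ℝ) * log (fiberCard f a / Fintype.card M) :=
  rfl

lemma sum_comp_eq_sum_fiberCard_mul (f : M → A) (φ : A → ℝ) :
    ∑ m, φ (f m) = ∑ a ∈ univ.image f, fiberCard f a * φ a := by
  simp only [sum_comp φ f, nsmul_eq_mul, fiberCard]

lemma sum_div_fiberCard (f : M → A) (φ : A → ℝ) :
    ∑ m, φ (f m) / fiberCard f (f m) = ∑ a ∈ univ.image f, φ a := by
  rw [sum_comp_eq_sum_fiberCard_mul f fun a => φ a / fiberCard f a]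
  refine sum_congr rfl fun a ha => ?_
  have := fiberCard_pos_of_mem_image ha
  exact mul_div_cancel₀ _ (by positivity)

lemma ent_eq (f : M → A) :
    ent f = log (Fintype.card M) - (∑ m, log (fiberCard f (f m))) / Fintype.card M := by
  rcases isEmpty_or_nonempty M with hM | hM
  · simp [ent]
  have hN : (0 : ℝ) < Fintype.card M := by exact_mod_cast Fintype.card_pos
  have hsum : ∑ a ∈ univ.image f, (fiberCard f a : ℝ) = Fintype.card M := by
    exact_mod_cast sum_fiberCard f
  have hterm : ∀ a ∈ univ.image f, (fiberCard f a / Fintype.card M : ℝ) *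
      log (fiberCard f a / Fintype.card M) =
      fiberCard f a * log (fiberCard f a) / Fintype.card M -
        fiberCard f a / Fintype.card M * log (Fintype.card M) := fun a ha => by
    have := fiberCard_pos_of_mem_image ha
    rw [log_div (by positivity) hN.ne']
    ring
  rw [ent_eq_sum_fiberCard, sum_comp_eq_sum_fiberCard_mul f fun a => log (fiberCard f a),
    sum_congr rfl hterm, sum_sub_distrib, ← sum_div, ← sum_mul, ← sum_div, hsum,
    div_self hN.ne']
  ring

lemma fiberCard_comp_of_injective {j : A → B} (hj : Function.Injective j) (f : M → A) (a : A) :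
    fiberCard (fun m => j (f m)) (j a) = fiberCard f a := by
  simp only [fiberCard, hj.eq_iff]

lemma ent_comp_of_injective {j : A → B} (hj : Function.Injective j) (f : M → A) :
    ent (fun m => j (f m)) = ent f := by
  simp only [ent_eq, fiberCard_comp_of_injective hj]

lemma ent_prod_assoc (f : M → A) (g : M → B) (h : M → C) :
    ent (fun m => ((f m, g m), h m)) = ent (fun m => (f m, g m, h m)) :=
  (ent_comp_of_injective (Equiv.prodAssoc A B C).injective fun m => ((f m, g m), h m)).symm

lemma sum_fiberCard_prod (f : M → A) (g : M → B) (a : A) :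
    ∑ b ∈ univ.image g, fiberCard (fun m => (f m, g m)) (a, b) = fiberCard f a := by
  rw [fiberCard, card_eq_sum_card_fiberwise (f := g) (t := univ.image g)
    fun m _ => mem_image_of_mem g (mem_univ m)]
  simp only [fiberCard, filter_filter, Prod.mk.injEq]

lemma sum_fiberCard_ratio_le (f : M → A) (g : M → B) (h : M → C) :
    ∑ m, (fiberCard (fun m => (f m, g m)) (f m, g m) * fiberCard (fun m => (f m, h m)) (f m, h m)
      : ℝ) / (fiberCard (fun m => (f m, g m, h m)) (f m, g m, h m) * fiberCard f (f m))
      ≤ Fintype.card M := by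
  set φ : A × B × C → ℝ := fun v =>
    fiberCard (fun m => (f m, g m)) (v.1, v.2.1) * fiberCard (fun m => (f m, h m)) (v.1, v.2.2) /
      fiberCard f v.1
  have hslice : ∀ a, ∑ b ∈ univ.image g, ∑ c ∈ univ.image h, φ (a, b, c) = fiberCard f a :=
    fun a => by
      simp only [φ, ← sum_div, ← sum_mul_sum, ← Nat.cast_sum, sum_fiberCard_prod]
      exact mul_self_div_self _
  calc _ = ∑ m, φ (f m, g m, h m) / fiberCard (fun m => (f m, g m, h m)) (f m, g m, h m) :=
        sum_congr rfl fun m _ => by simp only [φ]; ring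
    _ = ∑ v ∈ univ.image fun m => (f m, g m, h m), φ v := sum_div_fiberCard _ φ
    _ ≤ ∑ v ∈ univ.image f ×ˢ univ.image g ×ˢ univ.image h, φ v := by
        refine sum_le_sum_of_subset_of_nonneg ?_ fun v _ _ => by positivity
        intro v hv
        obtain ⟨m, -, rfl⟩ := mem_image.1 hv
        simp
    _ = Fintype.card M := by
        simp only [sum_product, hslice]
        exact_mod_cast sum_fiberCard f

lemma sum_log_fiberCard_add_le (f : M → A) (g : M → B) (h : M → C) :
    ∑ m, (log (fiberCard (fun m => (f m, g m)) (f m, g m)) +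
      log (fiberCard (fun m => (f m, h m)) (f m, h m))) ≤
    ∑ m, (log (fiberCard (fun m => (f m, g m, h m)) (f m, g m, h m)) +
      log (fiberCard f (f m))) := by
  calc _ ≤ ∑ m, (log (fiberCard (fun m => (f m, g m, h m)) (f m, g m, h m)) +
          log (fiberCard f (f m)) +
          ((fiberCard (fun m => (f m, g m)) (f m, g m) *
            fiberCard (fun m => (f m, h m)) (f m, h m) : ℝ) /
            (fiberCard (fun m => (f m, g m, h m)) (f m, g m, h m) * fiberCard f (f m)) - 1)) :=
        sum_le_sum fun m _ => log_add_log_le_log_add_log_add_div_sub_one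
          (mod_cast fiberCard_apply_pos _ m) (mod_cast fiberCard_apply_pos _ m)
          (mod_cast fiberCard_apply_pos _ m) (mod_cast fiberCard_apply_pos f m)
    _ ≤ _ := by
        simp only [sum_add_distrib, sum_sub_distrib, sum_const, card_univ, nsmul_one]
        linarith [sum_fiberCard_ratio_le f g h]

theorem ent_submodular (f : M → A) (g : M → B) (h : M → C) :
    ent (fun m => (f m, g m, h m)) + ent f ≤
      ent (fun m => (f m, g m)) + ent (fun m => (f m, h m)) := by
  have hdiv := div_le_div_of_nonneg_right (sum_log_fiberCard_add_le f g h)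
    (Nat.cast_nonneg (α := ℝ) (Fintype.card M))
  simp only [sum_add_distrib, add_div] at hdiv
  simp only [ent_eq]
  linarith

end

theorem stmt12_general {M X Y A B : Type*} [Fintype M]
    [DecidableEq X] [DecidableEq Y] [DecidableEq A] [DecidableEq B]
    (fx : M → X) (fy : M → Y) (fa : M → A) (fb : M → B)
    (habxy : ent (fun m => (fa m, fb m, fx m, fy m)) = ent (fun m => (fx m, fy m)))
    (hdsa : ent (fun m => (fa m, fb m, fx m)) = ent (fun m => (fb m, fx m)))
    (hdsb : ent (fun m => (fa m, fb m, fy m)) = ent (fun m => (fa m, fy m))) :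
    ent (fun m => (fa m, fb m)) ≤ (ent (fun m => (fb m, fx m)) - ent fx)
        + (ent (fun m => (fa m, fy m)) - ent fy)
        + (ent fx + ent fy - ent (fun m => (fx m, fy m))) := by
  have h := ent_submodular (fun m => (fa m, fb m)) fx fy
  rw [ent_prod_assoc fa fb, ent_prod_assoc fa fb, ent_prod_assoc fa fb] at h
  linarith

/-- With all edge functions determined by the sources and downstreamness,
`H(ab) ≤ H(b|x) + H(a|y) + I(x;y)`. -/
theorem stmt12 {M X Y A B : Type*} [Fintype M] [Nonempty M]
    [DecidableEq X] [DecidableEq Y] [DecidableEq A] [DecidableEq B]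
    (fx : M → X) (fy : M → Y) (fa : M → A) (fb : M → B)
    (haxy : ent (fun m => (fa m, fx m, fy m)) = ent (fun m => (fx m, fy m)))
    (hbxy : ent (fun m => (fb m, fx m, fy m)) = ent (fun m => (fx m, fy m)))
    (habxy : ent (fun m => (fa m, fb m, fx m, fy m)) = ent (fun m => (fx m, fy m)))
    (hdsa : ent (fun m => (fa m, fb m, fx m)) = ent (fun m => (fb m, fx m)))
    (hdsb : ent (fun m => (fa m, fb m, fy m)) = ent (fun m => (fa m, fy m))) :
    ent (fun m => (fa m, fb m)) ≤ (ent (fun m => (fb m, fx m)) - ent fx)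
        + (ent (fun m => (fa m, fy m)) - ent fy)
        + (ent fx + ent fy - ent (fun m => (fx m, fy m))) :=
  stmt12_general fx fy fa fb habxy hdsa hdsb
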